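/- arXiv:2112.08335 — 3 statements merged into one kernel-verified Lean document; each statement's English description precedes it below -/
import Mathlib

section
/- Fix n ≥ 1 and R, S > 0. Let F be a family of pairs (f, K), where K ⊆ B(0,R) ⊆ ℝⁿ is nonempty compact and f : K → ℝ is continuous with sup_{z∈K} |f(z)| ≤ S, such that F is uniformly equicontinuous: for every ε > 0 there is δ > 0 such that for all (f,K) ∈ F and z, w ∈ K with |z−w| < δ one has |f(z)−f(w)| < ε. Then every sequence ((f_m, K_m)) in F has a subsequence ((f_{m_j}, K_{m_j})) and a limit pair (f, K), with K ⊆ B(0,R) compact and f : K → ℝ continuous, such that d_H(K_{m_j}, K) → 0 and d_0((f_{m_j},K_{m_j}),(f,K)) → 0 as j → ∞. -/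
open Metric Filter Set TopologicalSpace

/-- `dZero f K g L = sup{|f z − g w| : z ∈ K, w ∈ L, |z−w| ≤ d_H(K,L)}`. -/
noncomputable def dZero {n : ℕ} (f : EuclideanSpace ℝ (Fin n) → ℝ)
    (K : Set (EuclideanSpace ℝ (Fin n))) (g : EuclideanSpace ℝ (Fin n) → ℝ)
    (L : Set (EuclideanSpace ℝ (Fin n))) : ℝ :=
  sSup {r : ℝ | ∃ z ∈ K, ∃ w ∈ L, dist z w ≤ hausdorffDist K L ∧ r = |f z - g w|}

/-- Arzelà–Ascoli for functions on varying compact domains: a uniformly bounded, uniformly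
equicontinuous family of pairs `(f, K)` with `K ⊆ B(0,R)` compact nonempty is sequentially
compact for the distance `d_H + dZero`. -/
theorem arzela_ascoli_varying_domains (n : ℕ) (hn : 1 ≤ n) (R S : ℝ) (hR : 0 < R) (hS : 0 < S)
    (F : Set ((EuclideanSpace ℝ (Fin n) → ℝ) × Set (EuclideanSpace ℝ (Fin n))))
    (hF : ∀ p ∈ F, p.2.Nonempty ∧ IsCompact p.2 ∧ p.2 ⊆ closedBall 0 R ∧
      ContinuousOn p.1 p.2 ∧ ∀ z ∈ p.2, |p.1 z| ≤ S)
    (hequi : ∀ ε : ℝ, 0 < ε → ∃ δ : ℝ, 0 < δ ∧ ∀ p ∈ F, ∀ z ∈ p.2, ∀ w ∈ p.2,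
      dist z w < δ → |p.1 z - p.1 w| < ε)
    (seq : ℕ → (EuclideanSpace ℝ (Fin n) → ℝ) × Set (EuclideanSpace ℝ (Fin n)))
    (hseq : ∀ m, seq m ∈ F) :
    ∃ φ : ℕ → ℕ, StrictMono φ ∧
      ∃ (f : EuclideanSpace ℝ (Fin n) → ℝ) (K : Set (EuclideanSpace ℝ (Fin n))),
        K.Nonempty ∧ IsCompact K ∧ K ⊆ closedBall 0 R ∧ ContinuousOn f K ∧
        Tendsto (fun j => hausdorffDist (seq (φ j)).2 K) atTop (nhds 0) ∧
        Tendsto (fun j => dZero (seq (φ j)).1 (seq (φ j)).2 f K) atTop (nhds 0) := by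
  classical
  let E := EuclideanSpace ℝ (Fin n)
  have hne : ∀ m, (seq m).2.Nonempty := fun m => (hF _ (hseq m)).1
  have hcomp : ∀ m, IsCompact (seq m).2 := fun m => (hF _ (hseq m)).2.1
  have hsub : ∀ m, (seq m).2 ⊆ closedBall 0 R := fun m => (hF _ (hseq m)).2.2.1
  have hbd : ∀ m, ∀ z ∈ (seq m).2, |(seq m).1 z| ≤ S := fun m => (hF _ (hseq m)).2.2.2.2
  -- the ambient ball as a compact subtype
  haveI : CompactSpace (closedBall (0 : E) R) :=
    isCompact_iff_compactSpace.mp (isCompact_closedBall _ _)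
  have hpre_c : ∀ m, IsCompact ((Subtype.val : closedBall (0 : E) R → E) ⁻¹' (seq m).2) := by
    intro m
    rw [isometry_subtype_coe.isEmbedding.isCompact_iff, Subtype.image_preimage_coe,
      inter_eq_self_of_subset_right (hsub m)]
    exact hcomp m
  have hpre_ne : ∀ m, ((Subtype.val : closedBall (0 : E) R → E) ⁻¹' (seq m).2).Nonempty := by
    intro m
    obtain ⟨x, hx⟩ := hne m
    exact ⟨⟨x, hsub m hx⟩, hx⟩
  let Kc : ℕ → NonemptyCompacts (closedBall (0 : E) R) := fun m =>
    ⟨⟨Subtype.val ⁻¹' (seq m).2, hpre_c m⟩, hpre_ne m⟩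
  obtain ⟨Kinf, φ₁, hφ₁, hKtend⟩ := CompactSpace.tendsto_subseq Kc
  set K : Set E := Subtype.val '' (Kinf : Set (closedBall (0 : E) R)) with hKdef
  have hKne : K.Nonempty := Kinf.nonempty.image _
  have hKcomp : IsCompact K := Kinf.isCompact.image continuous_subtype_val
  have hKsub : K ⊆ closedBall 0 R := by rintro x ⟨y, -, rfl⟩; exact y.2
  have himg : ∀ m, Subtype.val '' ((Kc m : Set (closedBall (0 : E) R))) = (seq m).2 := by
    intro m
    show Subtype.val '' (Subtype.val ⁻¹' (seq m).2) = (seq m).2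
    rw [Subtype.image_preimage_coe, inter_eq_self_of_subset_right (hsub m)]
  have hdist_eq : ∀ m, hausdorffDist (seq m).2 K = dist (Kc m) Kinf := by
    intro m
    rw [NonemptyCompacts.dist_eq, ← himg m, hKdef, hausdorffDist_image isometry_subtype_coe]
  -- nearest point maps
  have hqex : ∀ m (x : E), ∃ y ∈ (seq m).2, infDist x (seq m).2 = dist x y := fun m x =>
    (hcomp m).exists_infDist_eq_dist (hne m) x
  let q : ℕ → E → E := fun m x => (hqex m x).choose
  have hq_mem : ∀ m x, q m x ∈ (seq m).2 := fun m x => (hqex m x).choose_spec.1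
  have hq_dist : ∀ m x, infDist x (seq m).2 = dist x (q m x) := fun m x =>
    (hqex m x).choose_spec.2
  -- dense sequence
  obtain ⟨u, hu⟩ := TopologicalSpace.exists_dense_seq E
  -- second extraction: values at dense points
  have hvmem : ∀ j, (fun i => (seq (φ₁ j)).1 (q (φ₁ j) (u i))) ∈
      Set.pi univ (fun _ : ℕ => Icc (-S) S) := by
    intro j i _
    exact abs_le.mp (hbd (φ₁ j) _ (hq_mem (φ₁ j) (u i)))
  obtain ⟨a, -, φ₂, hφ₂, hatend⟩ :=
    (isCompact_univ_pi (fun _ : ℕ => isCompact_Icc)).tendsto_subseq hvmem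
  set φ : ℕ → ℕ := φ₁ ∘ φ₂ with hφdef
  have hφ : StrictMono φ := hφ₁.comp hφ₂
  -- convergence of K's
  have hdH : Tendsto (fun j => hausdorffDist (seq (φ j)).2 K) atTop (nhds 0) := by
    have h1 : Tendsto (fun j => hausdorffDist (seq (φ₁ j)).2 K) atTop (nhds 0) := by
      have := tendsto_iff_dist_tendsto_zero.mp hKtend
      simpa [Function.comp, hdist_eq] using this
    exact h1.comp hφ₂.tendsto_atTop
  -- abbreviations
  set g : ℕ → E → ℝ := fun j x => (seq (φ j)).1 (q (φ j) x) with hgdef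
  have hc : ∀ i, Tendsto (fun j => g j (u i)) atTop (nhds (a i)) := by
    intro i
    exact (tendsto_pi_nhds.mp hatend) i
  have hfin : ∀ j, EMetric.hausdorffEdist (seq (φ j)).2 K ≠ ⊤ := fun j =>
    hausdorffEdist_ne_top_of_nonempty_of_bounded (hne _) hKne
      ((hcomp _).isBounded) hKcomp.isBounded
  have hpd : ∀ j, ∀ x ∈ K, dist x (q (φ j) x) ≤ hausdorffDist (seq (φ j)).2 K := by
    intro j x hx
    rw [← hq_dist]
    calc infDist x (seq (φ j)).2 ≤ hausdorffDist K (seq (φ j)).2 :=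
          infDist_le_hausdorffDist_of_mem hx (by rw [EMetric.hausdorffEdist_comm]; exact hfin j)
      _ = hausdorffDist (seq (φ j)).2 K := hausdorffDist_comm
  -- equicontinuity along the subsequence
  have hequi' : ∀ ε : ℝ, 0 < ε → ∃ δ : ℝ, 0 < δ ∧ ∀ j, ∀ z ∈ (seq (φ j)).2, ∀ w ∈ (seq (φ j)).2,
      dist z w < δ → |(seq (φ j)).1 z - (seq (φ j)).1 w| < ε := by
    intro ε hε
    obtain ⟨δ, hδ0, hδ⟩ := hequi ε hε
    exact ⟨δ, hδ0, fun j => hδ _ (hseq (φ j))⟩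
  -- uniform Cauchy on K
  have hUC : UniformCauchySeqOn g atTop K := by
    rw [Metric.uniformCauchySeqOn_iff]
    intro ε hε
    obtain ⟨δ, hδ0, hδ⟩ := hequi' (ε/4) (by positivity)
    have hcover : K ⊆ ⋃ i : ℕ, ball (u i) (δ/8) := by
      intro x hx
      obtain ⟨i, hi⟩ := hu.exists_dist_lt x (show (0:ℝ) < δ/8 by positivity)
      exact mem_iUnion.mpr ⟨i, by simpa [mem_ball, dist_comm] using hi⟩
    obtain ⟨I, hI⟩ := hKcomp.elim_finite_subcover (fun i => ball (u i) (δ/8))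
      (fun i => isOpen_ball) hcover
    have hEv1 : ∀ᶠ j in atTop, hausdorffDist (seq (φ j)).2 K < δ/8 :=
      hdH.eventually (gt_mem_nhds (by positivity))
    have hEv2 : ∀ᶠ j in atTop, ∀ i ∈ I, dist (g j (u i)) (a i) < ε/8 := by
      rw [eventually_all_finset]
      intro i _
      exact (hc i).eventually (Metric.ball_mem_nhds (a i) (by positivity))
    obtain ⟨N, hN⟩ := eventually_atTop.mp (hEv1.and hEv2)
    refine ⟨N, fun m hm k hk x hx => ?_⟩
    obtain ⟨hm1, hm2⟩ := hN m hm
    obtain ⟨hk1, hk2⟩ := hN k hk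
    obtain ⟨i, hiI, hxi⟩ := mem_iUnion₂.mp (hI hx)
    rw [mem_ball] at hxi
    have key : ∀ l, hausdorffDist (seq (φ l)).2 K < δ/8 →
        dist (g l x) (g l (u i)) < ε/4 := by
      intro l hl
      have h1 : dist x (q (φ l) x) ≤ hausdorffDist (seq (φ l)).2 K := hpd l x hx
      have h2 : dist (u i) (q (φ l) (u i)) = infDist (u i) (seq (φ l)).2 :=
        (hq_dist (φ l) (u i)).symm
      have h3 : infDist (u i) (seq (φ l)).2 ≤ infDist x (seq (φ l)).2 + dist (u i) x :=
        infDist_le_infDist_add_dist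
      have h4 : infDist x (seq (φ l)).2 = dist x (q (φ l) x) := hq_dist (φ l) x
      have hdd : dist (q (φ l) x) (q (φ l) (u i)) < δ := by
        have := dist_triangle4 (q (φ l) x) x (u i) (q (φ l) (u i))
        have hxu : dist x (u i) < δ/8 := hxi
        have hux : dist (u i) x < δ/8 := by rwa [dist_comm] at hxu
        calc dist (q (φ l) x) (q (φ l) (u i))
            ≤ dist (q (φ l) x) x + dist x (u i) + dist (u i) (q (φ l) (u i)) := this
          _ < δ := by
              rw [dist_comm (q (φ l) x) x, h2]
              have := h3
              nlinarith [h1, hl, hxu, hux, h4, dist_nonneg (x := x) (y := q (φ l) x)]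
      have := hδ l _ (hq_mem (φ l) x) _ (hq_mem (φ l) (u i)) hdd
      simpa [hgdef, Real.dist_eq] using this
    have hmx := key m hm1
    have hkx := key k hk1
    have hmi := hm2 i hiI
    have hki := hk2 i hiI
    calc dist (g m x) (g k x)
        ≤ dist (g m x) (g m (u i)) + dist (g m (u i)) (g k (u i)) + dist (g k (u i)) (g k x) :=
          dist_triangle4 _ _ _ _
      _ ≤ dist (g m x) (g m (u i)) + (dist (g m (u i)) (a i) + dist (a i) (g k (u i)))
            + dist (g k (u i)) (g k x) := by
          have := dist_triangle (g m (u i)) (a i) (g k (u i))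
          linarith
      _ < ε := by
          rw [dist_comm (a i) (g k (u i)), dist_comm (g k (u i)) (g k x)]
          linarith
  -- pointwise limits and the limit function
  have hptC : ∀ x ∈ K, CauchySeq fun j => g j x := by
    intro x hx
    rw [Metric.cauchySeq_iff]
    intro ε hε
    obtain ⟨N, hN⟩ := Metric.uniformCauchySeqOn_iff.mp hUC ε hε
    exact ⟨N, fun m hm k hk => hN m hm k hk x hx⟩
  set f : E → ℝ := fun x => limUnder atTop fun j => g j x with hfdef
  have hfx : ∀ x ∈ K, Tendsto (fun j => g j x) atTop (nhds (f x)) := by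
    intro x hx
    obtain ⟨l, hl⟩ := cauchySeq_tendsto_of_complete (hptC x hx)
    have : f x = l := hl.limUnder_eq
    rw [this]; exact hl
  have hTU : TendstoUniformlyOn g f atTop K := hUC.tendstoUniformlyOn_of_tendsto hfx
  -- uniform continuity of the limit
  have hfcont : ∀ ε : ℝ, 0 < ε → ∃ δ : ℝ, 0 < δ ∧ ∀ x ∈ K, ∀ y ∈ K,
      dist x y < δ → dist (f x) (f y) ≤ ε := by
    intro ε hε
    obtain ⟨δ, hδ0, hδ⟩ := hequi' ε hε
    refine ⟨δ/2, by positivity, fun x hx y hy hxy => ?_⟩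
    have hEv : ∀ᶠ j in atTop, dist (g j x) (g j y) ≤ ε := by
      filter_upwards [hdH.eventually (gt_mem_nhds (show (0:ℝ) < δ/4 by positivity))] with j hj
      have hdd : dist (q (φ j) x) (q (φ j) y) < δ := by
        calc dist (q (φ j) x) (q (φ j) y)
            ≤ dist (q (φ j) x) x + dist x y + dist y (q (φ j) y) := dist_triangle4 _ _ _ _
          _ < δ := by
              have h1 := hpd j x hx
              have h2 := hpd j y hy
              rw [dist_comm (q (φ j) x) x]
              linarith
      have := hδ j _ (hq_mem (φ j) x) _ (hq_mem (φ j) y) hdd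
      exact le_of_lt (by simpa [hgdef, Real.dist_eq] using this)
    exact le_of_tendsto ((hfx x hx).dist (hfx y hy)) hEv
  have hfc : ContinuousOn f K := by
    rw [Metric.continuousOn_iff]
    intro x hx ε hε
    obtain ⟨δ, hδ0, hδ⟩ := hfcont (ε/2) (half_pos hε)
    refine ⟨δ, hδ0, fun y hy hyx => ?_⟩
    exact lt_of_le_of_lt (hδ y hy x hx hyx) (half_lt_self hε)
  have hfS : ∀ w ∈ K, |f w| ≤ S := by
    intro w hw
    exact le_of_tendsto (hfx w hw).abs
      (Eventually.of_forall fun j => hbd (φ j) _ (hq_mem (φ j) w))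
  -- the dZero convergence
  refine ⟨φ, hφ, f, K, hKne, hKcomp, hKsub, hfc, hdH, ?_⟩
  rw [Metric.tendsto_nhds]
  intro ε hε
  obtain ⟨δ, hδ0, hδ⟩ := hequi' (ε/4) (by positivity)
  have hEvU : ∀ᶠ j in atTop, ∀ w ∈ K, dist (f w) (g j w) < ε/4 :=
    Metric.tendstoUniformlyOn_iff.mp hTU (ε/4) (by positivity)
  filter_upwards [hdH.eventually (gt_mem_nhds (show (0:ℝ) < δ/2 by positivity)), hEvU]
    with j hj hjU
  set D : Set ℝ := {r : ℝ | ∃ z ∈ (seq (φ j)).2, ∃ w ∈ K,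
      dist z w ≤ hausdorffDist (seq (φ j)).2 K ∧ r = |(seq (φ j)).1 z - f w|} with hDdef
  have hDbdd : BddAbove D := by
    refine ⟨2 * S, ?_⟩
    rintro r ⟨z, hz, w, hw, -, rfl⟩
    calc |(seq (φ j)).1 z - f w| ≤ |(seq (φ j)).1 z| + |f w| := abs_sub _ _
      _ ≤ S + S := add_le_add (hbd (φ j) z hz) (hfS w hw)
      _ = 2 * S := by ring
  have hDne : D.Nonempty := by
    obtain ⟨z, hz⟩ := hne (φ j)
    obtain ⟨w, hwK, hw⟩ := hKcomp.exists_infDist_eq_dist hKne z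
    refine ⟨|(seq (φ j)).1 z - f w|, z, hz, w, hwK, ?_, rfl⟩
    rw [← hw]
    exact infDist_le_hausdorffDist_of_mem hz (hfin j)
  have hub : ∀ r ∈ D, r ≤ ε/2 := by
    rintro r ⟨z, hz, w, hw, hzw, rfl⟩
    have h1 : dist z (q (φ j) w) < δ := by
      calc dist z (q (φ j) w) ≤ dist z w + dist w (q (φ j) w) := dist_triangle _ _ _
        _ < δ := by
            have := hpd j w hw
            linarith
    have h2 : |(seq (φ j)).1 z - g j w| < ε/4 := by
      have := hδ j z hz _ (hq_mem (φ j) w) h1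
      simpa [hgdef] using this
    have h3 : |g j w - f w| < ε/4 := by
      have := hjU w hw
      rw [Real.dist_eq, abs_sub_comm] at this
      exact this
    calc |(seq (φ j)).1 z - f w|
        ≤ |(seq (φ j)).1 z - g j w| + |g j w - f w| := abs_sub_le _ _ _
      _ ≤ ε/2 := by linarith
  have hge : (0:ℝ) ≤ sSup D := by
    obtain ⟨r, hr⟩ := hDne
    have hr0 : 0 ≤ r := by
      obtain ⟨z, hz, w, hw, -, rfl⟩ := hr
      exact abs_nonneg _
    exact le_trans hr0 (le_csSup hDbdd hr)
  have hle : sSup D ≤ ε/2 := Real.sSup_le hub (by positivity)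
  have : dZero (seq (φ j)).1 (seq (φ j)).2 f K = sSup D := rfl
  rw [this, Real.dist_eq, sub_zero, abs_of_nonneg hge]
  linarith
end

section
/- Let Υ ⊆ ℝ², let ρ : Υ × Υ → [0, ∞) be a symmetric function satisfying the triangle inequality and ρ(z,z) = 0, which is continuous with respect to the Euclidean topology on Υ × Υ. Fix α > 0, integers j₀ ≤ N, and finite sets P_{j₀} ⊆ P_{j₀+1} ⊆ ⋯ ⊆ P_N ⊆ Υ such that each P_j is a 2^{-j}-net of Υ (every point of Υ is within Euclidean distance 2^{-j} of P_j), and such that for all j₀ ≤ j ≤ N and all x, y ∈ P_j with |x − y| ≤ 4·2^{-j} one has ρ(x, y) ≤ 2^{-αj}. Assume also that ρ(z, x) ≤ 2^{-αN} whenever z ∈ Υ, x ∈ P_N with |z − x| ≤ 2^{-N}. Then there is a constant C depending only on α such that for all z, w ∈ Υ and all integers J with j₀ ≤ J ≤ N and |z − w| ≤ 2^{-J}, one has ρ(z, w) ≤ C · 2^{-αJ}. -/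
open Metric

/-- Chaining (Kolmogorov–Centsov style) estimate: if `ρ` is a continuous symmetric
pseudometric on `Υ ⊆ ℝ²`, `P_j` (for `j₀ ≤ j ≤ N`) is an increasing family of finite
`2^{-j}`-nets of `Υ` with `ρ(x,y) ≤ 2^{-αj}` for net points at distance `≤ 4·2^{-j}`, and
`ρ(z,x) ≤ 2^{-αN}` for `z ∈ Υ` within `2^{-N}` of `x ∈ P_N`, then for a constant `C`
depending only on `α`, `|z−w| ≤ 2^{-J}` implies `ρ(z,w) ≤ C·2^{-αJ}` for `j₀ ≤ J ≤ N`. -/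
theorem chaining_holder_bound (α : ℝ) (hα : 0 < α) :
    ∃ C : ℝ, 0 < C ∧
      ∀ (Υ : Set (EuclideanSpace ℝ (Fin 2)))
        (ρ : EuclideanSpace ℝ (Fin 2) → EuclideanSpace ℝ (Fin 2) → ℝ),
        (∀ z w, 0 ≤ ρ z w) →
        (∀ z w, ρ z w = ρ w z) →
        (∀ z u w, ρ z w ≤ ρ z u + ρ u w) →
        (∀ z, ρ z z = 0) →
        ContinuousOn (fun p : EuclideanSpace ℝ (Fin 2) × EuclideanSpace ℝ (Fin 2) =>
          ρ p.1 p.2) (Υ ×ˢ Υ) →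
        ∀ (j₀ N : ℤ), j₀ ≤ N →
        ∀ P : ℤ → Set (EuclideanSpace ℝ (Fin 2)),
        (∀ j, j₀ ≤ j → j ≤ N → (P j).Finite ∧ P j ⊆ Υ) →
        (∀ j k, j₀ ≤ j → j ≤ k → k ≤ N → P j ⊆ P k) →
        (∀ j, j₀ ≤ j → j ≤ N → ∀ z ∈ Υ, ∃ x ∈ P j, dist z x ≤ (2:ℝ) ^ (-j)) →
        (∀ j, j₀ ≤ j → j ≤ N → ∀ x ∈ P j, ∀ y ∈ P j,
          dist x y ≤ 4 * (2:ℝ) ^ (-j) → ρ x y ≤ (2:ℝ) ^ (-α * (j:ℝ))) →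
        (∀ z ∈ Υ, ∀ x ∈ P N, dist z x ≤ (2:ℝ) ^ (-N) →
          ρ z x ≤ (2:ℝ) ^ (-α * (N:ℝ))) →
        ∀ z ∈ Υ, ∀ w ∈ Υ, ∀ J : ℤ, j₀ ≤ J → J ≤ N →
          dist z w ≤ (2:ℝ) ^ (-J) → ρ z w ≤ C * (2:ℝ) ^ (-α * (J:ℝ)) := by
  have hr0 : (0:ℝ) < (2:ℝ) ^ (-α) := Real.rpow_pos_of_pos two_pos _
  have hr1 : (2:ℝ) ^ (-α) < 1 :=
    Real.rpow_lt_one_of_one_lt_of_neg one_lt_two (by linarith)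
  set r : ℝ := (2:ℝ) ^ (-α) with hrdef
  set K : ℝ := 1 / (1 - r) with hKdef
  have hK1 : 1 ≤ K := by
    rw [hKdef]
    rw [le_div_iff₀ (by linarith)]
    linarith
  have hKr : K * (1 - r) = 1 := by
    rw [hKdef]; field_simp
    exact div_self (by linarith)
  refine ⟨2 * K + 1, by linarith, ?_⟩
  intro Υ ρ hρ0 hsymm htri hdiag _hcont j₀ N hj₀N P hPfin hPmono hPnet hPρ hPNρ
  -- key chaining claim, downward induction from N
  have key : ∀ n : ℕ, ∀ j : ℤ, j₀ ≤ j → j + n = N →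
      ∀ z ∈ Υ, ∀ x ∈ P j, dist z x ≤ (2:ℝ) ^ (-j) →
        ρ z x ≤ K * (2:ℝ) ^ (-α * (j:ℝ)) := by
    intro n
    induction n with
    | zero =>
      intro j hj hjN z hz x hx hd
      have hjN' : j = N := by exact_mod_cast by simpa using hjN
      subst hjN'
      have h := hPNρ z hz x hx hd
      have hpos : (0:ℝ) < (2:ℝ) ^ (-α * (j:ℝ)) := Real.rpow_pos_of_pos two_pos _
      nlinarith
    | succ n ih =>
      intro j hj hjN z hz x hx hd
      have hjN' : (j + 1) + (n:ℤ) = N := by push_cast at hjN ⊢; linarith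
      have hj1 : j₀ ≤ j + 1 := by linarith
      have hj1le : j + 1 ≤ N := by linarith [Int.ofNat_nonneg n, hjN']
      have hjle : j ≤ N := by linarith
      obtain ⟨y, hy, hdy⟩ := hPnet (j+1) hj1 hj1le z hz
      have hx1 : x ∈ P (j+1) := hPmono j (j+1) hj (by linarith) hj1le hx
      have h2pow : (2:ℝ) ^ (-j) = 2 * (2:ℝ) ^ (-(j+1)) := by
        rw [show -j = -(j+1) + 1 by ring, zpow_add₀ (two_ne_zero)]
        ring
      have hdyx : dist y x ≤ 4 * (2:ℝ) ^ (-(j+1)) := by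
        calc dist y x ≤ dist y z + dist z x := dist_triangle y z x
          _ ≤ (2:ℝ) ^ (-(j+1)) + (2:ℝ) ^ (-j) := by
              rw [dist_comm y z]; exact add_le_add hdy hd
          _ ≤ 4 * (2:ℝ) ^ (-(j+1)) := by
              rw [h2pow]
              have : (0:ℝ) < (2:ℝ) ^ (-(j+1)) := zpow_pos two_pos _
              linarith
      have hyx : ρ y x ≤ (2:ℝ) ^ (-α * ((j:ℝ)+1)) := by
        have := hPρ (j+1) hj1 hj1le y hy x hx1 hdyx
        convert this using 2
        push_cast
        ring
      have hzy : ρ z y ≤ K * (2:ℝ) ^ (-α * (((j:ℤ)+1:ℤ):ℝ)) :=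
        ih (j+1) hj1 hjN' z hz y hy hdy
      have hzy' : ρ z y ≤ K * (2:ℝ) ^ (-α * ((j:ℝ)+1)) := by
        convert hzy using 3; push_cast; ring
      have hsplit : (2:ℝ) ^ (-α * ((j:ℝ)+1)) = (2:ℝ) ^ (-α * (j:ℝ)) * r := by
        rw [hrdef, ← Real.rpow_add two_pos]
        ring_nf
      have htr := htri z y x
      have hpos : (0:ℝ) < (2:ℝ) ^ (-α * (j:ℝ)) := Real.rpow_pos_of_pos two_pos _
      -- ρ z x ≤ (K+1) * 2^{-α j} * r ≤ K * 2^{-α j}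
      have hfin : (K + 1) * r ≤ K := by nlinarith
      calc ρ z x ≤ ρ z y + ρ y x := htr
        _ ≤ K * (2:ℝ) ^ (-α * ((j:ℝ)+1)) + (2:ℝ) ^ (-α * ((j:ℝ)+1)) :=
            add_le_add hzy' hyx
        _ = (K + 1) * r * (2:ℝ) ^ (-α * (j:ℝ)) := by rw [hsplit]; ring
        _ ≤ K * (2:ℝ) ^ (-α * (j:ℝ)) := by nlinarith
  intro z hz w hw J hJ1 hJ2 hdzw
  obtain ⟨x, hx, hdx⟩ := hPnet J hJ1 hJ2 z hz
  obtain ⟨y, hy, hdy⟩ := hPnet J hJ1 hJ2 w hw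
  have hn : J + ((N - J).toNat : ℤ) = N := by
    rw [Int.toNat_of_nonneg (by linarith)]; ring
  have hzx := key (N - J).toNat J hJ1 hn z hz x hx hdx
  have hwy := key (N - J).toNat J hJ1 hn w hw y hy hdy
  have hpowpos : (0:ℝ) < (2:ℝ) ^ (-J) := zpow_pos two_pos _
  have hdxy : dist x y ≤ 4 * (2:ℝ) ^ (-J) := by
    calc dist x y ≤ dist x z + dist z w + dist w y := dist_triangle4 x z w y
      _ ≤ (2:ℝ) ^ (-J) + (2:ℝ) ^ (-J) + (2:ℝ) ^ (-J) := by
          rw [dist_comm x z]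
          exact add_le_add (add_le_add hdx hdzw) hdy
      _ ≤ 4 * (2:ℝ) ^ (-J) := by linarith
  have hxy := hPρ J hJ1 hJ2 x hx y hy hdxy
  have hyw : ρ y w ≤ K * (2:ℝ) ^ (-α * (J:ℝ)) := by rw [hsymm]; exact hwy
  calc ρ z w ≤ ρ z x + ρ x w := htri z x w
    _ ≤ ρ z x + (ρ x y + ρ y w) := by linarith [htri x y w]
    _ ≤ K * (2:ℝ) ^ (-α * (J:ℝ)) + ((2:ℝ) ^ (-α * (J:ℝ)) + K * (2:ℝ) ^ (-α * (J:ℝ))) :=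
        add_le_add hzx (add_le_add hxy hyw)
    _ = (2 * K + 1) * (2:ℝ) ^ (-α * (J:ℝ)) := by ring
end

section
/- Let p ∈ (1, 2] and let (ξ_i)_{i=1}^N be a martingale difference sequence with respect to a filtration (F_i) (i.e., each ξ_i is F_i-measurable, integrable, and E[ξ_i | F_{i−1}] = 0) with E[|ξ_i|^p] < ∞ for all i. Then E[|∑_{i=1}^N ξ_i|^p] ≤ 2 · ∑_{i=1}^N E[|ξ_i|^p]. -/
/-!
For `1 < p ≤ 2` and reals `a, b` one has `|a + b| ^ p ≤ |a| ^ p + g a * b + 2 * |b| ^ p`, where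
`g` is the derivative of `|x| ^ p`; this comes from the convexity of `x ^ p` together with the
`(p - 1)`-Hölder continuity of `x ^ (p - 1)`. Apply it with `a = S_{n-1}` and `b = ξ_n`: the cross
term has zero expectation, since `g (S_{n-1})` is `ℱ_{n-1}`-measurable and
`E[ξ_n | ℱ_{n-1}] = 0`. Hence `E|S_n| ^ p ≤ E|S_{n-1}| ^ p + 2 E|ξ_n| ^ p`, and induction on `n`
concludes.
-/
namespace Real

variable {p q x y : ℝ}

lemma rpow_sub_one_mul_self (hx : 0 ≤ x) (hp : p ≠ 0) : x ^ (p - 1) * x = x ^ p := by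
  rw [← rpow_add_one' hx (by simpa using hp), sub_add_cancel]

lemma abs_rpow_sub_rpow_le (hq0 : 0 ≤ q) (hq1 : q ≤ 1) (hx : 0 ≤ x) (hy : 0 ≤ y) :
    |x ^ q - y ^ q| ≤ |x - y| ^ q := by
  wlog hyx : y ≤ x generalizing x y
  · rw [abs_sub_comm, abs_sub_comm x]
    exact this hy hx (le_of_not_ge hyx)
  have hsub : x ^ q ≤ y ^ q + (x - y) ^ q := by
    simpa using rpow_add_le_add_rpow hy (sub_nonneg.2 hyx) hq0 hq1
  rw [abs_of_nonneg (sub_nonneg.2 (rpow_le_rpow hy hyx hq0)), abs_of_nonneg (sub_nonneg.2 hyx)]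
  linarith

lemma rpow_add_mul_sub_le_rpow (hp : 1 < p) {u v : ℝ} (hu : 0 ≤ u) (hv : 0 ≤ v) :
    u ^ p + p * u ^ (p - 1) * (v - u) ≤ v ^ p := by
  rcases hu.eq_or_lt with rfl | hu
  · rw [zero_rpow (by linarith), zero_rpow (by linarith)]
    simpa using rpow_nonneg hv p
  have hbernoulli := one_add_mul_self_le_rpow_one_add (s := v / u - 1) (by
    linarith [div_nonneg hv hu.le]) hp.le
  rw [add_sub_cancel, div_rpow hv hu.le, le_div_iff₀ (rpow_pos_of_pos hu p)] at hbernoulli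
  calc u ^ p + p * u ^ (p - 1) * (v - u) = (1 + p * (v / u - 1)) * u ^ p := by
        rw [rpow_sub_one hu.ne']; field_simp
    _ ≤ v ^ p := hbernoulli

lemma rpow_sub_one_mul_le_rpow_add_rpow (hp : 1 ≤ p) (hx : 0 ≤ x) (hy : 0 ≤ y) :
    x ^ (p - 1) * y ≤ x ^ p + y ^ p := by
  have hp0 : p ≠ 0 := by positivity
  rcases le_total y x with h | h
  · calc x ^ (p - 1) * y ≤ x ^ (p - 1) * x := by gcongr
      _ = x ^ p := rpow_sub_one_mul_self hx hp0
      _ ≤ x ^ p + y ^ p := le_add_of_nonneg_right (rpow_nonneg hy _)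
  · calc x ^ (p - 1) * y ≤ y ^ (p - 1) * y := by gcongr
      _ = y ^ p := rpow_sub_one_mul_self hy hp0
      _ ≤ x ^ p + y ^ p := le_add_of_nonneg_left (rpow_nonneg hx _)

end Real

/-- `p * sign x * |x| ^ (p - 1)`, the derivative of `x ↦ |x| ^ p`. -/
noncomputable def absRpowDeriv (p x : ℝ) : ℝ := p * x * |x| ^ (p - 2)

section absRpowDeriv

variable {p : ℝ}

lemma absRpowDeriv_neg (x : ℝ) : absRpowDeriv p (-x) = -absRpowDeriv p x := by
  simp only [absRpowDeriv, abs_neg]; ring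

lemma absRpowDeriv_of_nonneg (hp : 1 < p) {x : ℝ} (hx : 0 ≤ x) :
    absRpowDeriv p x = p * x ^ (p - 1) := by
  rw [absRpowDeriv, abs_of_nonneg hx, mul_assoc, ← Real.rpow_one_add' hx (by linarith)]
  ring_nf

lemma abs_absRpowDeriv (hp : 1 < p) (x : ℝ) : |absRpowDeriv p x| = p * |x| ^ (p - 1) := by
  rw [← absRpowDeriv_of_nonneg hp (abs_nonneg x), absRpowDeriv, absRpowDeriv, abs_mul, abs_mul,
    abs_of_pos (by linarith : 0 < p), abs_abs, abs_of_nonneg (Real.rpow_nonneg (abs_nonneg x) _)]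

lemma measurable_absRpowDeriv (p : ℝ) : Measurable (absRpowDeriv p) := by
  unfold absRpowDeriv; fun_prop

lemma abs_absRpowDeriv_mul_le (hp : 1 < p) (x y : ℝ) :
    |absRpowDeriv p x * y| ≤ p * (|x| ^ p + |y| ^ p) := by
  rw [abs_mul, abs_absRpowDeriv hp, mul_assoc]
  gcongr
  exact Real.rpow_sub_one_mul_le_rpow_add_rpow hp.le (abs_nonneg x) (abs_nonneg y)

lemma abs_add_rpow_le_of_nonneg (hp1 : 1 < p) (hp2 : p ≤ 2) {a : ℝ} (ha : 0 ≤ a) (b : ℝ) :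
    |a + b| ^ p ≤ |a| ^ p + absRpowDeriv p a * b + 2 * |b| ^ p := by
  rw [absRpowDeriv_of_nonneg hp1 ha, abs_of_nonneg ha]
  have hbp : 0 ≤ |b| ^ p := by positivity
  rcases le_or_gt 0 (a + b) with hs | hs
  · have htangent := Real.rpow_add_mul_sub_le_rpow hp1 hs ha
    have hholder : b * ((a + b) ^ (p - 1) - a ^ (p - 1)) ≤ |b| ^ p :=
      calc b * ((a + b) ^ (p - 1) - a ^ (p - 1))
          ≤ |b| * |(a + b) ^ (p - 1) - a ^ (p - 1)| := by rw [← abs_mul]; exact le_abs_self _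
        _ ≤ |b| * |b| ^ (p - 1) := by
          gcongr
          simpa using Real.abs_rpow_sub_rpow_le (by linarith) (by linarith) hs ha
        _ = |b| ^ p := by rw [mul_comm, Real.rpow_sub_one_mul_self (abs_nonneg b) (by linarith)]
    rw [abs_of_nonneg hs]
    nlinarith
  · -- `p ≤ 2` enters here: `p a ^ (p - 1) (-b) ≤ (-b) ^ p + (p - 1) a ^ p ≤ (-b) ^ p + a ^ p`.
    have htangent := Real.rpow_add_mul_sub_le_rpow hp1 ha (by linarith : 0 ≤ -b)
    have hmono : |a + b| ^ p ≤ |b| ^ p := by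
      refine Real.rpow_le_rpow (abs_nonneg _) ?_ (by linarith)
      rw [abs_of_neg hs, abs_of_neg (by linarith : b < 0)]
      linarith
    have haa : a ^ (p - 1) * a = a ^ p := Real.rpow_sub_one_mul_self ha (by linarith)
    rw [abs_of_neg (by linarith : b < 0)] at hbp hmono ⊢
    nlinarith [Real.rpow_nonneg ha p]

theorem abs_add_rpow_le (hp1 : 1 < p) (hp2 : p ≤ 2) (a b : ℝ) :
    |a + b| ^ p ≤ |a| ^ p + absRpowDeriv p a * b + 2 * |b| ^ p := by
  rcases le_total 0 a with ha | ha
  · exact abs_add_rpow_le_of_nonneg hp1 hp2 ha b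
  · have h := abs_add_rpow_le_of_nonneg hp1 hp2 (neg_nonneg.2 ha) (-b)
    rwa [← neg_add, abs_neg, abs_neg, abs_neg, absRpowDeriv_neg, neg_mul_neg] at h

end absRpowDeriv

namespace MeasureTheory

variable {Ω : Type*} {m m0 : MeasurableSpace Ω} {μ : Measure Ω}

lemma integrable_abs_rpow_iff_memLp {f : Ω → ℝ} (hf : AEStronglyMeasurable f μ) {p : ℝ}
    (hp : 0 < p) : Integrable (fun ω => |f ω| ^ p) μ ↔ MemLp f (ENNReal.ofReal p) μ := by
  simpa [ENNReal.toReal_ofReal hp.le] using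
    integrable_norm_rpow_iff hf (ENNReal.ofReal_pos.2 hp).ne' ENNReal.ofReal_ne_top

lemma MemLp.integrable_abs_rpow {f : Ω → ℝ} {p : ℝ} (hp : 0 < p)
    (hf : MemLp f (ENNReal.ofReal p) μ) : Integrable (fun ω => |f ω| ^ p) μ :=
  (integrable_abs_rpow_iff_memLp hf.1 hp).2 hf

lemma integral_mul_eq_zero_of_condExp_eq_zero (hm : m ≤ m0) [SigmaFinite (μ.trim hm)]
    {X Y : Ω → ℝ} (hX : StronglyMeasurable[m] X) (hXY : Integrable (X * Y) μ)
    (hY : Integrable Y μ) (hY0 : μ[Y|m] =ᵐ[μ] 0) : ∫ ω, X ω * Y ω ∂μ = 0 := by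
  have hcondExp : μ[X * Y|m] =ᵐ[μ] 0 := by
    filter_upwards [condExp_mul_of_stronglyMeasurable_left hX hXY hY, hY0] with ω h h0
    simp [h, h0]
  calc ∫ ω, X ω * Y ω ∂μ = ∫ ω, μ[X * Y|m] ω ∂μ := (integral_condExp hm).symm
    _ = 0 := (integral_congr_ae hcondExp).trans (integral_zero _ _)

theorem integral_abs_add_rpow_le_of_condExp_eq_zero (hm : m ≤ m0) [SigmaFinite (μ.trim hm)]
    {p : ℝ} (hp1 : 1 < p) (hp2 : p ≤ 2) {X Y : Ω → ℝ} (hX : StronglyMeasurable[m] X)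
    (hXp : MemLp X (ENNReal.ofReal p) μ) (hY : Integrable Y μ)
    (hYp : MemLp Y (ENNReal.ofReal p) μ) (hY0 : μ[Y|m] =ᵐ[μ] 0) :
    ∫ ω, |X ω + Y ω| ^ p ∂μ ≤ ∫ ω, |X ω| ^ p ∂μ + 2 * ∫ ω, |Y ω| ^ p ∂μ := by
  have hp0 : 0 < p := by linarith
  have hX_int := hXp.integrable_abs_rpow hp0
  have hY_int := hYp.integrable_abs_rpow hp0
  set G : Ω → ℝ := fun ω => absRpowDeriv p (X ω)
  have hG : StronglyMeasurable[m] G :=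
    ((measurable_absRpowDeriv p).comp hX.measurable).stronglyMeasurable
  have hGY : Integrable (fun ω => G ω * Y ω) μ :=
    ((hX_int.add hY_int).const_mul p).mono' ((hG.mono hm).aestronglyMeasurable.mul hY.1)
      (ae_of_all _ fun ω => abs_absRpowDeriv_mul_le hp1 (X ω) (Y ω))
  have hXG : Integrable (fun ω => |X ω| ^ p + G ω * Y ω) μ := hX_int.add hGY
  calc ∫ ω, |X ω + Y ω| ^ p ∂μ ≤ ∫ ω, |X ω| ^ p + G ω * Y ω + 2 * |Y ω| ^ p ∂μ :=
        integral_mono ((hXp.add hYp).integrable_abs_rpow hp0) (hXG.add (hY_int.const_mul 2))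
          fun ω => abs_add_rpow_le hp1 hp2 _ _
    _ = ∫ ω, |X ω| ^ p ∂μ + ∫ ω, G ω * Y ω ∂μ + 2 * ∫ ω, |Y ω| ^ p ∂μ := by
        rw [integral_add hXG (hY_int.const_mul 2), integral_add hX_int hGY, integral_const_mul]
    _ = ∫ ω, |X ω| ^ p ∂μ + 2 * ∫ ω, |Y ω| ^ p ∂μ := by
        rw [integral_mul_eq_zero_of_condExp_eq_zero hm hG hGY hY hY0, add_zero]

end MeasureTheory

open MeasureTheory

/-- Von Bahr–Esseen inequality for martingale differences: if `p ∈ (1,2]` and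
`(ξ_i)_{i=1}^N` is a martingale difference sequence with `E[|ξ_i|^p] < ∞`, then
`E[|∑ ξ_i|^p] ≤ 2 ∑ E[|ξ_i|^p]`. -/
theorem von_bahr_esseen {Ω : Type*} {m0 : MeasurableSpace Ω} (P : Measure Ω)
    [IsProbabilityMeasure P] (p : ℝ) (hp1 : 1 < p) (hp2 : p ≤ 2)
    (N : ℕ) (ℱ : Filtration ℕ m0) (ξ : ℕ → Ω → ℝ)
    (hadapted : ∀ i, 1 ≤ i → i ≤ N → StronglyMeasurable[ℱ i] (ξ i))
    (hint : ∀ i, 1 ≤ i → i ≤ N → Integrable (ξ i) P)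
    (hmart : ∀ i, 1 ≤ i → i ≤ N → P[ξ i|ℱ (i - 1)] =ᵐ[P] (0 : Ω → ℝ))
    (hmom : ∀ i, 1 ≤ i → i ≤ N → Integrable (fun ω => |ξ i ω| ^ p) P) :
    (∫ ω, |∑ i ∈ Finset.Icc 1 N, ξ i ω| ^ p ∂P) ≤
      2 * ∑ i ∈ Finset.Icc 1 N, ∫ ω, |ξ i ω| ^ p ∂P := by
  have hmemLp : ∀ i, 1 ≤ i → i ≤ N → MemLp (ξ i) (ENNReal.ofReal p) P := fun i hi hiN =>
    (integrable_abs_rpow_iff_memLp (hint i hi hiN).1 (by linarith)).1 (hmom i hi hiN)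
  suffices ∀ n ≤ N, ∫ ω, |∑ i ∈ Finset.Icc 1 n, ξ i ω| ^ p ∂P ≤
      2 * ∑ i ∈ Finset.Icc 1 n, ∫ ω, |ξ i ω| ^ p ∂P from this N le_rfl
  intro n
  induction n with
  | zero => simp [Real.zero_rpow (by linarith : p ≠ 0)]
  | succ n ih =>
    intro hn
    have hIcc : ∀ i ∈ Finset.Icc 1 n, 1 ≤ i ∧ i ≤ n := fun i hi => Finset.mem_Icc.1 hi
    have hS_meas : StronglyMeasurable[ℱ n] fun ω => ∑ i ∈ Finset.Icc 1 n, ξ i ω :=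
      Finset.stronglyMeasurable_fun_sum _ fun i hi =>
        (hadapted i (hIcc i hi).1 (by grind)).mono (ℱ.mono (hIcc i hi).2)
    have hS_memLp : MemLp (fun ω => ∑ i ∈ Finset.Icc 1 n, ξ i ω) (ENNReal.ofReal p) P :=
      memLp_finsetSum _ fun i hi => hmemLp i (hIcc i hi).1 (by grind)
    have hξ_mart : P[ξ (n + 1)|ℱ n] =ᵐ[P] 0 := by simpa using hmart (n + 1) (by omega) hn
    have hstep := integral_abs_add_rpow_le_of_condExp_eq_zero (ℱ.le n) hp1 hp2 hS_meas hS_memLp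
      (hint _ (by omega) hn) (hmemLp _ (by omega) hn) hξ_mart
    simp only [Finset.sum_Icc_succ_top (by omega : 1 ≤ n + 1)]
    linarith [ih (by omega)]
end
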